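/- For every real t > 0 with t ≠ 1/2, set s = log(1/(16t⁴)). Then there exists an invertible 4×4 real matrix P such that P·M_t·P⁻¹ = M'_s and P·W_t·P⁻¹ = (2t)·L'_s, where: M_t is the matrix with rows (1,0,1,t−1), (0,1,1,t), (0,0,1,t+1/2), (0,0,0,1); W_t = N_t·M_t⁻¹·N_t⁻¹·M_t²·N_t⁻¹·M_t⁻¹·N_t with N_t the matrix with rows (1,0,0,0), (2+1/t,1,0,0), (2,1,1,0), (1,1,0,1); M'_s is the matrix with rows (1, 0, √(sinh(s/4)/(3s)), sinh(s/4)/(6s)), (0,1,0,0), (0,0,1,√(sinh(s/4)/(3s))), (0,0,0,1); and L'_s is the matrix with rows (1, (e^s−1)/s, 0, (e^s−s−1)/s²), (0, e^s, 0, (e^s−1)/s), (0,0,1,0), (0,0,0,1). -/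

import Mathlib

/-!
The longitude factors as `l = [n, m⁻¹] [m, n⁻¹]`, which gives `W_t` in closed form: it is block
upper triangular with lower right block `2t · 1`. An explicit matrix `P`, polynomial in `t`, `s` and
`u = √(sinh (s/4) / (3s))`, intertwines `M_t` with `M'_s` once `12 t s u² = 1 - 4t²`, which is
`sinh (s/4) = ((2t)⁻¹ - 2t) / 2` for `s = 4 log (2t)⁻¹`, and intertwines `W_t` with `2t L'_s` once
`eˢ = 1/(16t⁴)`. Its determinant `-72 t³ u s⁷ (2t-1)⁵ (2t+1)³` vanishes only at `t = 1/2`,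
since `sinh x / x > 0` for `x ≠ 0` keeps `u ≠ 0`.
-/

/-- The meridian matrix `M_t = ρ_t(m)`. -/
noncomputable def Mmat (t : ℝ) : Matrix (Fin 4) (Fin 4) ℝ :=
  !![1, 0, 1, t - 1;
     0, 1, 1, t;
     0, 0, 1, t + 1 / 2;
     0, 0, 0, 1]

/-- The meridian matrix `N_t = ρ_t(n)`. -/
noncomputable def Nmat (t : ℝ) : Matrix (Fin 4) (Fin 4) ℝ :=
  !![1, 0, 0, 0;
     2 + 1 / t, 1, 0, 0;
     2, 1, 1, 0;
     1, 1, 0, 1]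

/-- The longitude matrix `W_t = ρ_t(l)`, `l = n m⁻¹ n⁻¹ m² n⁻¹ m⁻¹ n`. -/
noncomputable def Wmat (t : ℝ) : Matrix (Fin 4) (Fin 4) ℝ :=
  Nmat t * (Mmat t)⁻¹ * (Nmat t)⁻¹ * (Mmat t) ^ 2 * (Nmat t)⁻¹ * (Mmat t)⁻¹ * Nmat t

/-- The conjugated meridian `M'_s` of equation (6.1). -/
noncomputable def M's (s : ℝ) : Matrix (Fin 4) (Fin 4) ℝ :=
  !![1, 0, Real.sqrt (Real.sinh (s / 4) / (3 * s)), Real.sinh (s / 4) / (6 * s);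
     0, 1, 0, 0;
     0, 0, 1, Real.sqrt (Real.sinh (s / 4) / (3 * s));
     0, 0, 0, 1]

/-- The conjugated longitude `L'_s` of equation (6.1). -/
noncomputable def L's (s : ℝ) : Matrix (Fin 4) (Fin 4) ℝ :=
  !![1, (Real.exp s - 1) / s, 0, (Real.exp s - s - 1) / s ^ 2;
     0, Real.exp s, 0, (Real.exp s - 1) / s;
     0, 0, 1, 0;
     0, 0, 0, 1]

open Matrix Real

lemma Mmat_inv (t : ℝ) :
    (Mmat t)⁻¹ = !![1, 0, -1, 3 / 2; 0, 1, -1, 1 / 2; 0, 0, 1, -1 / 2 - t; 0, 0, 0, 1] := by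
  refine inv_eq_right_inv ?_
  ext i j
  fin_cases i <;> fin_cases j <;> simp [Mmat, mul_apply, Fin.sum_univ_four] <;> ring

lemma Nmat_inv {t : ℝ} (ht : t ≠ 0) :
    (Nmat t)⁻¹ = !![1, 0, 0, 0; -2 - 1 / t, 1, 0, 0; 1 / t, -1, 1, 0; 1 + 1 / t, -1, 0, 1] := by
  refine inv_eq_right_inv ?_
  ext i j
  fin_cases i <;> fin_cases j <;>
    simp [Nmat, mul_apply, Fin.sum_univ_four] <;> field_simp <;> ring

lemma Nmat_mul_Mmat_inv_mul_Nmat_inv_mul_Mmat {t : ℝ} (ht : t ≠ 0) :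
    Nmat t * (Mmat t)⁻¹ * (Nmat t)⁻¹ * Mmat t =
    !![5 / 2 + 1 / (2 * t), -1 / 2, 1 + 1 / (2 * t), t - 1 - 1 / (2 * t);
       7 / 2 + 2 / t + 1 / (2 * t ^ 2), 1 / 2 - 1 / (2 * t), 1 + 1 / (2 * t) + 1 / (2 * t ^ 2),
        t - 1 - 1 / (2 * t) - 1 / (2 * t ^ 2);
       2 - t, t, 0, 0;
       2, 0, 0, 0] := by
  rw [Mmat_inv, Nmat_inv ht]
  ext i j
  fin_cases i <;> fin_cases j <;>
    simp [Nmat, Mmat, mul_apply, Fin.sum_univ_four] <;> field_simp <;> ring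

lemma Mmat_mul_Nmat_inv_mul_Mmat_inv_mul_Nmat {t : ℝ} (ht : t ≠ 0) :
    Mmat t * (Nmat t)⁻¹ * (Mmat t)⁻¹ * Nmat t =
    !![0, 0, 0, t; 0, 0, 2, t - 2;
       1 - 3 / (4 * t), 1 + 3 / (4 * t), 1 - 3 / (2 * t), t + 3 / 2 + 9 / (4 * t);
       1 - 1 / (2 * t), 1 + 1 / (2 * t), -1 / t, 2 + 3 / (2 * t)] := by
  rw [Mmat_inv, Nmat_inv ht]
  ext i j
  fin_cases i <;> fin_cases j <;>
    simp [Nmat, Mmat, mul_apply, Fin.sum_univ_four] <;> field_simp <;> ring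

lemma Wmat_eq {t : ℝ} (ht : t ≠ 0) : Wmat t =
    !![t - 1 / 2 - 1 / (4 * t) - 1 / (8 * t ^ 2), t + 1 / 2 + 1 / (4 * t) + 1 / (8 * t ^ 2),
        -1 - 1 / (4 * t ^ 2), 5 * t + 3 + 1 / (2 * t) + 3 / (8 * t ^ 2);
       t - 1 / 2 - 1 / (4 * t) - 1 / (8 * t ^ 2) - 1 / (8 * t ^ 3),
        t + 1 / 2 + 1 / (4 * t) + 1 / (8 * t ^ 2) + 1 / (8 * t ^ 3),
        1 - 1 / t + 1 / (4 * t ^ 2) - 1 / (4 * t ^ 3),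
        7 * t + 2 + 5 / (2 * t) + 1 / (8 * t ^ 2) + 3 / (8 * t ^ 3);
       0, 0, 2 * t, 0;
       0, 0, 0, 2 * t] := by
  have hfactor : Wmat t = (Nmat t * (Mmat t)⁻¹ * (Nmat t)⁻¹ * Mmat t) *
      (Mmat t * (Nmat t)⁻¹ * (Mmat t)⁻¹ * Nmat t) := by
    simp only [Wmat, pow_two, Matrix.mul_assoc]
  rw [hfactor, Nmat_mul_Mmat_inv_mul_Nmat_inv_mul_Mmat ht,
    Mmat_mul_Nmat_inv_mul_Mmat_inv_mul_Nmat ht]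
  ext i j
  fin_cases i <;> fin_cases j <;> simp [mul_apply, Fin.sum_univ_four] <;> field_simp <;> ring

noncomputable def parabolic (u : ℝ) : Matrix (Fin 4) (Fin 4) ℝ :=
  !![1, 0, u, u ^ 2 / 2;
     0, 1, 0, 0;
     0, 0, 1, u;
     0, 0, 0, 1]

lemma M's_eq_parabolic {s : ℝ} (h : 0 ≤ sinh (s / 4) / (3 * s)) :
    M's s = parabolic √(sinh (s / 4) / (3 * s)) := by
  rw [M's, parabolic, sq_sqrt h, div_div, show 3 * s * 2 = 6 * s by ring]

noncomputable def conjugator (t s u : ℝ) : Matrix (Fin 4) (Fin 4) ℝ :=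
  !![s * (2 * t - 1) ^ 2 * (2 * t + 1), 0, s * (5 - 2 * t) * (2 * t - 1) ^ 2 / 2,
      6 * (2 * t - 1) ^ 2 * (2 * t + 1) + s * (4 * t ^ 2 - 2 * t + 3) * (2 * t - 1);
     s ^ 2 * t * (2 * t - 1) * (2 * t + 1), -(s ^ 2 * t * (2 * t - 1) * (2 * t + 1)),
      2 * t * s ^ 2 * (2 * t - 1),
      6 * t * s * (2 * t - 1) * (2 * t + 1) + s ^ 2 * t * (4 * t ^ 2 - 2 * t + 3);
     0, 0, -(12 * t * u * s ^ 2 * (2 * t - 1)), 0;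
     0, 0, 0, -(6 * t * s ^ 2 * (2 * t - 1) * (2 * t + 1))]

lemma det_conjugator (t s u : ℝ) :
    (conjugator t s u).det = -72 * t ^ 3 * u * s ^ 7 * (2 * t - 1) ^ 5 * (2 * t + 1) ^ 3 := by
  simp [conjugator, det_succ_row_zero, Fin.sum_univ_succ]
  ring

lemma conjugator_mul_Mmat {t s u : ℝ} (h : 12 * t * s * u ^ 2 = 1 - 4 * t ^ 2) :
    conjugator t s u * Mmat t = parabolic u * conjugator t s u := by
  ext i j
  fin_cases i <;> fin_cases j <;>
    simp [conjugator, Mmat, parabolic, mul_apply, Fin.sum_univ_four] <;>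
    first
      | ring1
      | linear_combination (s * (2 * t - 1)) * h
      | linear_combination (s * (t ^ 2 - 1 / 4)) * h

lemma conjugator_mul_Wmat {t s u : ℝ} (ht : t ≠ 0) (hs : s ≠ 0)
    (hexp : exp s = 1 / (16 * t ^ 4)) :
    conjugator t s u * Wmat t = (2 * t) • L's s * conjugator t s u := by
  rw [Wmat_eq ht, L's, hexp]
  ext i j
  fin_cases i <;> fin_cases j <;> simp [conjugator, mul_apply, Fin.sum_univ_four] <;>
    field_simp <;> ring

lemma sinh_div_self_pos {x : ℝ} (hx : x ≠ 0) : 0 < sinh x / x := by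
  rcases hx.lt_or_gt with h | h
  · exact div_pos_of_neg_of_neg (sinh_neg_iff.2 h) h
  · exact div_pos (sinh_pos_iff.2 h) h

/-- Equation (6.1): for `t > 0`, `t ≠ 1/2`, with `s = log(1/(16t⁴))`, the peripheral pair
`(M_t, W_t)` is simultaneously conjugate to `(M'_s, (2t)·L'_s)`. -/
theorem stmt_18 (t : ℝ) (ht : 0 < t) (ht' : t ≠ 1 / 2) :
    ∃ P : Matrix (Fin 4) (Fin 4) ℝ, IsUnit P ∧
      P * Mmat t * P⁻¹ = M's (Real.log (1 / (16 * t ^ 4))) ∧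
      P * Wmat t * P⁻¹ = (2 * t) • L's (Real.log (1 / (16 * t ^ 4))) := by
  set s := log (1 / (16 * t ^ 4)) with hs
  have h2t : 2 * t - 1 ≠ 0 := by contrapose! ht'; linarith
  have hquarter : s / 4 = log (2 * t)⁻¹ := by
    rw [hs, show 1 / (16 * t ^ 4) = (2 * t)⁻¹ ^ 4 by ring, log_pow]
    ring
  have hs0 : s ≠ 0 := by
    have : log (2 * t)⁻¹ ≠ 0 :=
      log_ne_zero_of_pos_of_ne_one (by positivity) (by contrapose! h2t; field_simp at h2t; linarith)
    contrapose! this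
    rw [← hquarter, this, zero_div]
  have hpos : 0 < sinh (s / 4) / (3 * s) := by
    have := sinh_div_self_pos (div_ne_zero hs0 four_ne_zero)
    rw [show sinh (s / 4) / (3 * s) = sinh (s / 4) / (s / 4) / 12 by field_simp; ring]
    positivity
  set u := √(sinh (s / 4) / (3 * s))
  have hu : 12 * t * s * u ^ 2 = 1 - 4 * t ^ 2 := by
    rw [sq_sqrt hpos.le, hquarter, sinh_log (by positivity)]
    field_simp
    ring
  have hdet : IsUnit (conjugator t s u).det := by
    rw [det_conjugator, isUnit_iff_ne_zero]
    have hu0 : u ≠ 0 := (sqrt_pos.2 hpos).ne'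
    have h2t' : 2 * t + 1 ≠ 0 := by positivity
    simp [ht.ne', hu0, hs0, h2t, h2t']
  refine ⟨conjugator t s u, (isUnit_iff_isUnit_det _).2 hdet, ?_, ?_⟩
  · rw [conjugator_mul_Mmat hu, M's_eq_parabolic hpos.le, mul_nonsing_inv_cancel_right _ _ hdet]
  · rw [conjugator_mul_Wmat ht.ne' hs0 (exp_log (by positivity)),
      mul_nonsing_inv_cancel_right _ _ hdet]
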